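/- (Commutator estimate.) Let h be a Schwartz function on ℝ^d, let a : ℝ^d → ℝ be differentiable with bounded gradient, let E be a Banach space, and let g : ℝ^d → E be bounded and measurable. For q ∈ ℤ define K_q g(x) = 2^{qd} ∫_{ℝ^d} h(2^q(x − y)) (a(x) − a(y)) g(y) dy. Then for every p ∈ [1, ∞], ‖K_q g‖_{L^p(ℝ^d; E)} ≤ 2^{−q} · ‖∇a‖_{L^∞(ℝ^d)} · (∫_{ℝ^d} |z| |h(z)| dz) · ‖g‖_{L^p(ℝ^d; E)}. -/

import Mathlib

/-!
The commutator kernel is controlled pointwise by a convolution: since `a` is Lipschitz with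
constant `‖∇a‖_{L^∞}`, `|K_q g| ≤ |g| ⋆ k` with `k(z) = ‖∇a‖_{L^∞} |z| 2^{qd} |h(2^q z)|`, and
Young's inequality `‖f ⋆ k‖_p ≤ ‖f‖_p ‖k‖_1` finishes, the scaling `z ↦ 2^q z` turning `‖k‖_1`
into `2^{-q} ‖∇a‖_{L^∞} ∫ |z| |h z| dz`.

The Lipschitz bound only knows `∇a` up to null sets. It is obtained by Fubini: for each direction
`u`, almost every line `t ↦ w + t u` meets the bad set of `∇a` in a null set, so the fundamental
theorem of calculus bounds `a (w + u) - a w` for almost every `w`, hence for every `w` by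
continuity.
-/

open MeasureTheory Function Module
open scoped ENNReal NNReal

section Lipschitz

variable {E F : Type*} [NormedAddCommGroup E] [NormedSpace ℝ E]
  [NormedAddCommGroup F] [NormedSpace ℝ F] [CompleteSpace F]

theorem norm_sub_le_of_ae_norm_deriv_le {φ : ℝ → F} {C : ℝ} (hφ : Differentiable ℝ φ)
    (hC : ∀ᵐ t, ‖deriv φ t‖ ≤ C) (a b : ℝ) : ‖φ b - φ a‖ ≤ C * |b - a| := by
  have hint : IntervalIntegrable (deriv φ) volume a b :=
    (intervalIntegrable_const (c := C)).mono_fun (aestronglyMeasurable_deriv φ _)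
      (ae_restrict_of_ae (hC.mono fun t ht => ht.trans (le_abs_self C)))
  rw [← intervalIntegral.integral_eq_sub_of_hasDerivAt (fun t _ => (hφ t).hasDerivAt) hint]
  exact intervalIntegral.norm_integral_le_of_norm_le_const_ae (hC.mono fun t ht _ => ht)

variable [MeasurableSpace E] [BorelSpace E]

theorem ae_forall_ae_add_smul_mem (μ : Measure E) [SFinite μ] [μ.IsAddRightInvariant]
    {s : Set E} (hs : MeasurableSet s) (h : ∀ᵐ x ∂μ, x ∈ s) (u : E) :
    ∀ᵐ x ∂μ, ∀ᵐ t : ℝ, x + t • u ∈ s := by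
  refine Measure.ae_ae_of_ae_prod (p := fun z : E × ℝ => z.1 + z.2 • u ∈ s) ?_
  have hline : MeasurableSet {z : E × ℝ | z.1 + z.2 • u ∉ s} :=
    (continuous_fst.add (continuous_snd.smul continuous_const)).measurable hs.compl
  rw [ae_iff, Measure.prod_apply_symm hline]
  have hfiber : ∀ t : ℝ, μ ((fun x => (x, t)) ⁻¹' {z : E × ℝ | z.1 + z.2 • u ∉ s}) = 0 :=
    fun t => (measure_preimage_add_right μ (t • u) sᶜ).trans (ae_iff.mp h)
  simp only [hfiber, lintegral_zero]

theorem lipschitzWith_of_ae_nnnorm_fderiv_le (μ : Measure E) [SFinite μ]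
    [μ.IsAddRightInvariant] [μ.IsOpenPosMeasure] {f : E → F} {C : ℝ≥0}
    (hf : Differentiable ℝ f) (h : ∀ᵐ x ∂μ, ‖fderiv ℝ f x‖₊ ≤ C) : LipschitzWith C f := by
  refine LipschitzWith.of_dist_le_mul fun x y => ?_
  set u := x - y
  have hsegment : ∀ᵐ w ∂μ, ‖f (w + u) - f w‖ ≤ C * ‖u‖ := by
    have hs : MeasurableSet {x | ‖fderiv ℝ f x‖₊ ≤ C} :=
      measurableSet_le (measurable_fderiv ℝ f).nnnorm measurable_const
    filter_upwards [ae_forall_ae_add_smul_mem μ hs h u] with w hw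
    have hderiv : ∀ t : ℝ, HasDerivAt (fun t : ℝ => f (w + t • u)) (fderiv ℝ f (w + t • u) u) t :=
      fun t => (hf _).hasFDerivAt.comp_hasDerivAt t
        (((hasDerivAt_id t).smul_const u).const_add w |>.congr_deriv (one_smul ℝ u))
    have hbound : ∀ᵐ t : ℝ, ‖deriv (fun t : ℝ => f (w + t • u)) t‖ ≤ C * ‖u‖ := by
      filter_upwards [hw] with t ht
      rw [(hderiv t).deriv]
      exact (fderiv ℝ f _).le_of_opNorm_le (by exact_mod_cast ht) u
    simpa using norm_sub_le_of_ae_norm_deriv_le (fun t => (hderiv t).differentiableAt) hbound 0 1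
  have hclosed : IsClosed {w | ‖f (w + u) - f w‖ ≤ C * ‖u‖} :=
    isClosed_le (by have := hf.continuous; fun_prop) continuous_const
  have hy : y ∈ {w | ‖f (w + u) - f w‖ ≤ C * ‖u‖} := by
    rw [← hclosed.closure_eq, (Measure.dense_of_ae hsegment).closure_eq]; trivial
  simpa [u, dist_eq_norm] using hy

theorem enorm_sub_le_eLpNorm_fderiv_mul (μ : Measure E) [SFinite μ] [μ.IsAddRightInvariant]
    [μ.IsOpenPosMeasure] {f : E → F} (hf : Differentiable ℝ f) (x y : E) :
    ‖f x - f y‖ₑ ≤ eLpNorm (fderiv ℝ f) ∞ μ * ‖x - y‖ₑ := by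
  rw [eLpNorm_exponent_top]
  by_cases htop : eLpNormEssSup (fderiv ℝ f) μ = ∞
  · rcases eq_or_ne x y with rfl | hxy
    · simp
    · rw [htop, ENNReal.top_mul (by simpa [sub_eq_zero] using hxy)]
      exact le_top
  have hbound : ∀ᵐ x ∂μ, ‖fderiv ℝ f x‖₊ ≤ (eLpNormEssSup (fderiv ℝ f) μ).toNNReal :=
    ae_le_eLpNormEssSup.mono fun x hx => ENNReal.toNNReal_mono htop hx
  have := (lipschitzWith_of_ae_nnnorm_fderiv_le μ hf hbound).edist_le_mul x y
  rwa [edist_eq_enorm_sub, edist_eq_enorm_sub, ENNReal.coe_toNNReal htop] at this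

end Lipschitz

theorem rpow_lintegral_mul_le {α : Type*} [MeasurableSpace α] (μ : Measure α)
    {f w : α → ℝ≥0∞} (hf : AEMeasurable f μ) (hw : AEMeasurable w μ) {r : ℝ} (hr : 1 ≤ r) :
    (∫⁻ a, f a * w a ∂μ) ^ r ≤ (∫⁻ a, w a ∂μ) ^ (r - 1) * ∫⁻ a, f a ^ r * w a ∂μ := by
  have hr0 : 0 < r := zero_lt_one.trans_le hr
  have hconj : 0 ≤ 1 - 1 / r := sub_nonneg.2 ((div_le_one hr0).2 hr)
  have hsplit : ∀ a, (f a ^ r * w a) ^ (1 / r) * w a ^ (1 - 1 / r) = f a * w a := fun a => by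
    rw [ENNReal.mul_rpow_of_nonneg _ _ (by positivity), ← ENNReal.rpow_mul,
      mul_one_div_cancel hr0.ne', ENNReal.rpow_one, mul_assoc,
      ← ENNReal.rpow_add_of_nonneg _ _ (by positivity) hconj, add_sub_cancel, ENNReal.rpow_one]
  have holder := ENNReal.lintegral_mul_norm_pow_le (f := fun a => f a ^ r * w a)
    ((hf.pow_const r).mul hw) hw (by positivity) hconj (add_sub_cancel _ _)
  simp only [hsplit] at holder
  calc (∫⁻ a, f a * w a ∂μ) ^ r
      ≤ ((∫⁻ a, f a ^ r * w a ∂μ) ^ (1 / r) * (∫⁻ a, w a ∂μ) ^ (1 - 1 / r)) ^ r :=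
        ENNReal.rpow_le_rpow holder hr0.le
    _ = (∫⁻ a, w a ∂μ) ^ (r - 1) * ∫⁻ a, f a ^ r * w a ∂μ := by
        rw [ENNReal.mul_rpow_of_nonneg _ _ hr0.le, ← ENNReal.rpow_mul, ← ENNReal.rpow_mul,
          one_div_mul_cancel hr0.ne', ENNReal.rpow_one, sub_mul, one_div_mul_cancel hr0.ne',
          one_mul, mul_comm]

section Convolution

variable {G : Type*} [MeasurableSpace G] [AddCommGroup G] [MeasurableAdd₂ G] [MeasurableNeg G]
  (μ : Measure G) [μ.IsAddLeftInvariant] [μ.IsNegInvariant]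

theorem lintegral_neg_add_eq_self (k : G → ℝ≥0∞) (x : G) :
    ∫⁻ y, k (-y + x) ∂μ = ∫⁻ y, k y ∂μ := by
  simp only [neg_add_eq_sub, lintegral_sub_left_eq_self]

variable [SFinite μ]

theorem eLpNorm_lconvolution_le {f k : G → ℝ≥0∞} (hf : Measurable f) (hk : Measurable k)
    {p : ℝ≥0∞} (hp : 1 ≤ p) : eLpNorm (f ⋆ₗ[μ] k) p μ ≤ eLpNorm f p μ * ∫⁻ x, k x ∂μ := by
  have hkx : ∀ x, Measurable fun y => k (-y + x) := fun x => hk.comp (measurable_neg.add_const x)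
  rcases eq_or_ne p ∞ with rfl | hptop
  · simp only [eLpNorm_exponent_top]
    refine eLpNormEssSup_le_of_ae_enorm_bound (ae_of_all _ fun x => ?_)
    calc (f ⋆ₗ[μ] k) x ≤ ∫⁻ y, eLpNormEssSup f μ * k (-y + x) ∂μ :=
          lintegral_mono_ae (ae_le_eLpNormEssSup.mono fun y hy => mul_le_mul_left hy _)
      _ = eLpNormEssSup f μ * ∫⁻ y, k y ∂μ := by
          rw [lintegral_const_mul _ (hkx x), lintegral_neg_add_eq_self]
  set r := p.toReal
  have hr : 1 ≤ r := by simpa using ENNReal.toReal_mono hptop hp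
  have hr0 : 0 < r := zero_lt_one.trans_le hr
  set A := ∫⁻ y, k y ∂μ
  have hmeas : Measurable (uncurry fun x y => f y ^ r * k (-y + x)) :=
    (hf.comp measurable_snd).pow_const r |>.mul (hk.comp (measurable_snd.neg.add measurable_fst))
  have hswap : ∫⁻ x, ∫⁻ y, f y ^ r * k (-y + x) ∂μ ∂μ = (∫⁻ y, f y ^ r ∂μ) * A := by
    rw [lintegral_lintegral_swap hmeas.aemeasurable]
    have hinner : ∀ y, ∫⁻ x, f y ^ r * k (-y + x) ∂μ = f y ^ r * A := fun y => by
      rw [lintegral_const_mul _ (f := fun x => k (-y + x)) (hk.comp (measurable_const_add _)),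
        lintegral_add_left_eq_self]
    simp only [hinner, lintegral_mul_const _ (hf.pow_const r)]
  rw [eLpNorm_eq_lintegral_rpow_enorm_toReal (by positivity) hptop,
    eLpNorm_eq_lintegral_rpow_enorm_toReal (by positivity) hptop]
  simp only [enorm_eq_self]
  calc (∫⁻ x, (f ⋆ₗ[μ] k) x ^ r ∂μ) ^ (1 / r)
      ≤ (∫⁻ x, A ^ (r - 1) * ∫⁻ y, f y ^ r * k (-y + x) ∂μ ∂μ) ^ (1 / r) := by
        gcongr with x
        exact (rpow_lintegral_mul_le μ hf.aemeasurable (hkx x).aemeasurable hr).trans_eq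
          (by rw [lintegral_neg_add_eq_self])
    _ = ((∫⁻ y, f y ^ r ∂μ) * A ^ r) ^ (1 / r) := by
        have hpow : A ^ (r - 1) * A = A ^ r := by
          simpa using (ENNReal.rpow_add_of_nonneg (x := A) _ _ (sub_nonneg.2 hr) zero_le_one).symm
        rw [lintegral_const_mul _ hmeas.lintegral_prod_right, hswap, mul_left_comm, hpow]
    _ = (∫⁻ y, f y ^ r ∂μ) ^ (1 / r) * A := by
        rw [ENNReal.mul_rpow_of_nonneg _ _ (by positivity), ← ENNReal.rpow_mul,
          mul_one_div_cancel hr0.ne', ENNReal.rpow_one]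

end Convolution

section Scaling

variable {E : Type*} [NormedAddCommGroup E] [NormedSpace ℝ E] [MeasurableSpace E] [BorelSpace E]
  [FiniteDimensional ℝ E] (μ : Measure E) [μ.IsAddHaarMeasure]

theorem lintegral_comp_smul {f : E → ℝ≥0∞} (hf : Measurable f) {c : ℝ} (hc : c ≠ 0) :
    ∫⁻ x, f (c • x) ∂μ = ENNReal.ofReal |(c ^ finrank ℝ E)⁻¹| * ∫⁻ x, f x ∂μ := by
  rw [← lintegral_map hf (measurable_const_smul c), Measure.map_addHaar_smul μ hc,
    lintegral_smul_measure, smul_eq_mul]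

theorem ofReal_pow_finrank_mul_lintegral_enorm_mul_comp_smul {f : E → ℝ≥0∞} (hf : Measurable f)
    {c : ℝ} (hc : 0 < c) :
    ENNReal.ofReal (c ^ finrank ℝ E) * ∫⁻ x, ‖x‖ₑ * f (c • x) ∂μ =
      ENNReal.ofReal c⁻¹ * ∫⁻ x, ‖x‖ₑ * f x ∂μ := by
  have hnorm : ∀ x : E, ‖x‖ₑ = ENNReal.ofReal c⁻¹ * ‖c • x‖ₑ := fun x => by
    rw [enorm_smul, Real.enorm_of_nonneg hc.le, ← mul_assoc, ← ENNReal.ofReal_mul (by positivity),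
      inv_mul_cancel₀ hc.ne', ENNReal.ofReal_one, one_mul]
  have hmeas : Measurable fun x : E => ‖x‖ₑ * f x := measurable_enorm.mul hf
  have hcancel : ENNReal.ofReal (c ^ finrank ℝ E) * ENNReal.ofReal |(c ^ finrank ℝ E)⁻¹| = 1 := by
    rw [← ENNReal.ofReal_mul (by positivity), abs_of_pos (by positivity),
      mul_inv_cancel₀ (by positivity), ENNReal.ofReal_one]
  calc ENNReal.ofReal (c ^ finrank ℝ E) * ∫⁻ x, ‖x‖ₑ * f (c • x) ∂μ
      = ENNReal.ofReal (c ^ finrank ℝ E) *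
          ∫⁻ x, ENNReal.ofReal c⁻¹ * (‖c • x‖ₑ * f (c • x)) ∂μ := by
        congr 1; exact lintegral_congr fun x => by rw [hnorm x, mul_assoc]
    _ = ENNReal.ofReal c⁻¹ * ∫⁻ x, ‖x‖ₑ * f x ∂μ := by
        rw [lintegral_const_mul _ (f := fun x => ‖c • x‖ₑ * f (c • x))
            (hmeas.comp (measurable_const_smul c)), lintegral_comp_smul μ hmeas hc.ne',
          mul_left_comm, ← mul_assoc (ENNReal.ofReal (c ^ finrank ℝ E)), hcancel, one_mul]

end Scaling

theorem SchwartzMap.ofReal_integral_norm_mul_norm {E F : Type*} [NormedAddCommGroup E]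
    [NormedSpace ℝ E] [MeasurableSpace E] [BorelSpace E] [SecondCountableTopology E]
    [NormedAddCommGroup F] [NormedSpace ℝ F]
    (μ : Measure E) [μ.HasTemperateGrowth] (h : SchwartzMap E F) :
    ENNReal.ofReal (∫ x, ‖x‖ * ‖h x‖ ∂μ) = ∫⁻ x, ‖x‖ₑ * ‖h x‖ₑ ∂μ := by
  rw [ofReal_integral_eq_lintegral_ofReal (by simpa using h.integrable_pow_mul μ 1)
    (ae_of_all _ fun x => by positivity)]
  simp only [ENNReal.ofReal_mul (norm_nonneg _), ofReal_norm]

theorem enorm_two_zpow_mul_lintegral_enorm_mul_comp_smul {d : ℕ}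
    (h : SchwartzMap (EuclideanSpace ℝ (Fin d)) ℝ) (q : ℤ) :
    ‖(2:ℝ) ^ (q * (d : ℤ))‖ₑ * ∫⁻ z, ‖z‖ₑ * ‖h ((2:ℝ) ^ q • z)‖ₑ =
      ENNReal.ofReal ((2:ℝ) ^ (-q)) * ENNReal.ofReal (∫ z, ‖z‖ * |h z|) := by
  have hdil : ‖(2:ℝ) ^ (q * (d : ℤ))‖ₑ =
      ENNReal.ofReal (((2:ℝ) ^ q) ^ finrank ℝ (EuclideanSpace ℝ (Fin d))) := by
    rw [finrank_euclideanSpace_fin, ← zpow_natCast, ← zpow_mul,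
      Real.enorm_of_nonneg (by positivity)]
  rw [hdil, ofReal_pow_finrank_mul_lintegral_enorm_mul_comp_smul volume
      h.continuous.measurable.enorm (zpow_pos two_pos q),
    ← zpow_neg, ← SchwartzMap.ofReal_integral_norm_mul_norm]
  simp only [Real.norm_eq_abs]

theorem enorm_integral_mul_sub_smul_le_lconvolution {E F : Type*} [NormedAddCommGroup E]
    [MeasurableSpace E] [NormedAddCommGroup F] [NormedSpace ℝ F] (μ : Measure E)
    {a : E → ℝ} {A : ℝ≥0∞} (ha : ∀ x y, ‖a x - a y‖ₑ ≤ A * ‖x - y‖ₑ) (φ : E → ℝ) (g : E → F)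
    (x : E) :
    ‖∫ y, (φ (x - y) * (a x - a y)) • g y ∂μ‖ₑ ≤
      ((fun y => ‖g y‖ₑ) ⋆ₗ[μ] fun z => A * (‖z‖ₑ * ‖φ z‖ₑ)) x := by
  refine (enorm_integral_le_lintegral_enorm _).trans (lintegral_mono fun y => ?_)
  calc ‖(φ (x - y) * (a x - a y)) • g y‖ₑ = ‖g y‖ₑ * (‖a x - a y‖ₑ * ‖φ (x - y)‖ₑ) := by
        rw [enorm_smul, enorm_mul]; ring
    _ ≤ ‖g y‖ₑ * (A * ‖x - y‖ₑ * ‖φ (x - y)‖ₑ) := by gcongr; exact ha x y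
    _ = ‖g y‖ₑ * (A * (‖-y + x‖ₑ * ‖φ (-y + x)‖ₑ)) := by rw [neg_add_eq_sub, mul_assoc A]

theorem commutator_estimate_general {d : ℕ} {E : Type*}
    [NormedAddCommGroup E] [NormedSpace ℝ E]
    (h : SchwartzMap (EuclideanSpace ℝ (Fin d)) ℝ)
    (a : EuclideanSpace ℝ (Fin d) → ℝ) (ha : Differentiable ℝ a)
    (g : EuclideanSpace ℝ (Fin d) → E) (hg : StronglyMeasurable g)
    (q : ℤ) (p : ℝ≥0∞) (hp : 1 ≤ p) :
    eLpNorm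
        (fun x => ((2:ℝ) ^ (q * (d : ℤ))) •
          ∫ y, (h ((2:ℝ) ^ q • (x - y)) * (a x - a y)) • g y)
        p volume ≤
      ENNReal.ofReal ((2:ℝ) ^ (-q)) *
        eLpNorm (fun x => fderiv ℝ a x) ∞ volume *
        ENNReal.ofReal (∫ z, ‖z‖ * |h z|) *
        eLpNorm g p volume := by
  set A := eLpNorm (fderiv ℝ a) ∞ volume
  set k := fun z : EuclideanSpace ℝ (Fin d) => A * (‖z‖ₑ * ‖h ((2:ℝ) ^ q • z)‖ₑ)
  have hhq : Measurable fun z : EuclideanSpace ℝ (Fin d) => ‖h ((2:ℝ) ^ q • z)‖ₑ :=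
    (h.continuous.comp (continuous_const_smul _)).measurable.enorm
  have hk : Measurable k := measurable_const.mul (measurable_enorm.mul hhq)
  have hmass : ‖(2:ℝ) ^ (q * (d : ℤ))‖ₑ * ∫⁻ z, k z =
      ENNReal.ofReal ((2:ℝ) ^ (-q)) * A * ENNReal.ofReal (∫ z, ‖z‖ * |h z|) := by
    rw [lintegral_const_mul _ (f := fun z => ‖z‖ₑ * ‖h ((2:ℝ) ^ q • z)‖ₑ)
      (measurable_enorm.mul hhq), mul_left_comm, enorm_two_zpow_mul_lintegral_enorm_mul_comp_smul]
    ring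
  calc _ = ‖(2:ℝ) ^ (q * (d : ℤ))‖ₑ *
        eLpNorm (fun x => ∫ y, (h ((2:ℝ) ^ q • (x - y)) * (a x - a y)) • g y) p volume :=
        eLpNorm_const_smul ..
    _ ≤ ‖(2:ℝ) ^ (q * (d : ℤ))‖ₑ * eLpNorm ((fun y => ‖g y‖ₑ) ⋆ₗ k) p volume := by
        gcongr
        exact eLpNorm_mono_enorm fun x => enorm_integral_mul_sub_smul_le_lconvolution volume
          (enorm_sub_le_eLpNorm_fderiv_mul volume ha) _ g x
    _ ≤ ‖(2:ℝ) ^ (q * (d : ℤ))‖ₑ * (eLpNorm g p volume * ∫⁻ z, k z) := by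
        gcongr
        exact (eLpNorm_lconvolution_le volume hg.enorm hk hp).trans_eq (by rw [eLpNorm_enorm])
    _ = _ := by rw [mul_left_comm, hmass, mul_comm]

/-- commutator estimate: for `h` Schwartz, `a` differentiable with bounded
gradient, `E` Banach and `g : ℝ^d → E` bounded measurable, the commutator
`K_q g(x) = 2^{qd} ∫ h(2^q(x-y)) (a(x) - a(y)) g(y) dy` satisfies, for every `p ∈ [1,∞]`,
`‖K_q g‖_{L^p(ℝ^d;E)} ≤ 2^{-q} ‖∇a‖_{L^∞} (∫ |z||h(z)| dz) ‖g‖_{L^p(ℝ^d;E)}`. -/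
theorem commutator_estimate {d : ℕ} {E : Type*}
    [NormedAddCommGroup E] [NormedSpace ℝ E] [CompleteSpace E]
    (h : SchwartzMap (EuclideanSpace ℝ (Fin d)) ℝ)
    (a : EuclideanSpace ℝ (Fin d) → ℝ) (ha : Differentiable ℝ a)
    (ha' : ∃ L : ℝ, ∀ x, ‖fderiv ℝ a x‖ ≤ L)
    (g : EuclideanSpace ℝ (Fin d) → E) (hg : StronglyMeasurable g)
    (hgb : ∃ M : ℝ, ∀ x, ‖g x‖ ≤ M)
    (q : ℤ) (p : ℝ≥0∞) (hp : 1 ≤ p) :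
    eLpNorm
        (fun x => ((2:ℝ) ^ (q * (d : ℤ))) •
          ∫ y, (h ((2:ℝ) ^ q • (x - y)) * (a x - a y)) • g y)
        p volume ≤
      ENNReal.ofReal ((2:ℝ) ^ (-q)) *
        eLpNorm (fun x => fderiv ℝ a x) ∞ volume *
        ENNReal.ofReal (∫ z, ‖z‖ * |h z|) *
        eLpNorm g p volume :=
  commutator_estimate_general h a ha g hg q p hp
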